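/- Let 𝔽 be a field and let M and N be m×m matrices over 𝔽. For nonsingular matrices of the form occurring in the left-hand reduction: if the bangles ℒ_k(M) and ℒ_k(N) (built from M and N by bordering with identity blocks I_{r_2},…,I_{r_k} as in equation (el.2) of the paper) are *congruent as bangles, then M and N are *congruent as bangles, and conversely. -/

import Mathlib

open Matrix

/-- Column index type of a bangle `M = [⟦M₁⟧ | M₂ | … | M_t]` whose boxed (first) strip
`M₁` is `m × m`, whose strips `M₂,…,M_k` have widths `r 0,…,r (k-2)` (the bordering sizes
`r₂,…,r_k`), and whose strips `M_{k+1},…,M_t` have widths `w`. -/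
abbrev MCol (t k m : ℕ) (r : Fin (k - 1) → ℕ) (w : Fin (t - k) → ℕ) : Type :=
  Fin m ⊕ (((i : Fin (k - 1)) × Fin (r i)) ⊕ ((i : Fin (t - k)) × Fin (w i)))

/-- Strip number of a column of `M`: `M₁` is strip `0`, `M_{i+2}` is strip `i+1`,
`M_{k+1+i}` is strip `k+i`. -/
def stripM (t k m : ℕ) (r : Fin (k - 1) → ℕ) (w : Fin (t - k) → ℕ)
    (hk1 : 1 ≤ k) (hkt : k ≤ t) : MCol t k m r w → Fin t
  | Sum.inl _ => ⟨0, by omega⟩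
  | Sum.inr (Sum.inl ⟨i, _⟩) => ⟨(i : ℕ) + 1, by have := i.isLt; omega⟩
  | Sum.inr (Sum.inr ⟨i, _⟩) => ⟨k + (i : ℕ), by have := i.isLt; omega⟩

/-- Row index type of the bangle `ℒ_k(M)`: the first horizontal strip has height `m`,
followed by horizontal strips of heights `r₂,…,r_k`. -/
abbrev LRow (k m : ℕ) (r : Fin (k - 1) → ℕ) : Type :=
  Fin m ⊕ ((i : Fin (k - 1)) × Fin (r i))

/-- Column index type of `ℒ_k(M)`: the unboxed left strips consist of the bordering
identity columns (the columns of `I_{r i}` belong to strip `k-2-i`), the boxed strip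
(strip `k-1`) is square with columns indexed by the rows, and the right strips have
widths `w`. -/
abbrev LCol (t k m : ℕ) (r : Fin (k - 1) → ℕ) (w : Fin (t - k) → ℕ) : Type :=
  ((i : Fin (k - 1)) × Fin (r i)) ⊕ (LRow k m r ⊕ ((i : Fin (t - k)) × Fin (w i)))

/-- Strip number of a column of `ℒ_k(M)`. -/
def stripL (t k m : ℕ) (r : Fin (k - 1) → ℕ) (w : Fin (t - k) → ℕ)
    (hk1 : 1 ≤ k) (hkt : k ≤ t) : LCol t k m r w → Fin t
  | Sum.inl ⟨i, _⟩ => ⟨k - 2 - (i : ℕ), by have := i.isLt; omega⟩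
  | Sum.inr (Sum.inl _) => ⟨k - 1, by omega⟩
  | Sum.inr (Sum.inr ⟨i, _⟩) => ⟨k + (i : ℕ), by have := i.isLt; omega⟩

/-- The bangle `ℒ_k(M)` obtained from `M` by bordering with identity blocks
`I_{r₂},…,I_{r_k}`:  the left strips are the identity columns (`I_{r i}` sitting in the
horizontal strip labelled `i`), the boxed strip has first block row `(M₁ M₂ … M_k)` and
zero block rows below, and the right strips have first block row `M_{k+1},…,M_t` and
zeros below. -/
def LofM {F : Type} [Field F] (t k m : ℕ) (r : Fin (k - 1) → ℕ) (w : Fin (t - k) → ℕ)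
    (M : Matrix (Fin m) (MCol t k m r w) F) :
    Matrix (LRow k m r) (LCol t k m r w) F :=
  Matrix.of fun rr cc =>
    match rr, cc with
    | Sum.inl _, Sum.inl _ => 0
    | Sum.inr ⟨i', b⟩, Sum.inl ⟨i, c⟩ =>
        if (i' : ℕ) = (i : ℕ) ∧ (b : ℕ) = (c : ℕ) then 1 else 0
    | Sum.inl a, Sum.inr (Sum.inl (Sum.inl b)) => M a (Sum.inl b)
    | Sum.inl a, Sum.inr (Sum.inl (Sum.inr z)) => M a (Sum.inr (Sum.inl z))
    | Sum.inl a, Sum.inr (Sum.inr y) => M a (Sum.inr (Sum.inr y))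
    | Sum.inr _, Sum.inr _ => 0

/-- *Congruence of bangles, for a bangle with rows `R`, columns `C`, strip numbering
`strip : C → Fin t` and boxed-strip inclusion `β : R → C`:
`B = S_{kk}ᴴ A S` with `S` nonsingular and upper block-triangular. -/
def BangleStarCongr {F : Type} [Field F] [StarRing F] {R C : Type}
    [Fintype R] [Fintype C] [DecidableEq C] {t : ℕ}
    (strip : C → Fin t) (β : R → C) (A B : Matrix R C F) : Prop :=
  ∃ S : Matrix C C F,
    IsUnit S ∧ (∀ p q, strip q < strip p → S p q = 0) ∧
    B = (S.submatrix β β)ᴴ * A * S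

/-! Write `ℒ_k(M)` as the block matrix `[[0, M], [I, 0]]`, with the border strips as first
column block and the columns of `M` (reassociated) as second. A matrix `S` that is upper
block-triangular for the strips of `ℒ_k(M)` is `[[S₁, S₂], [0, S₄]]`, and its boxed block `G`
is the leading block of `S₄`. Splitting `G` along the strips of `M` as `[[G₁₁, G₁₂], [G₂₁, G₂₂]]`,
the equation `ℒ_k(N) = Gᴴ ℒ_k(M) S` is equivalent to
`G₂₁ = 0`, `G₂₂ᴴ S₁ = 1`, `N = G₁₁ᴴ M S₄` and `S₂ = -S₁ G₁₂ᴴ M S₄`.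
Hence `S₄` is a *congruence of `M` with `N`, and conversely every such `S₄` extends to one of
`ℒ_k(M)` with `S₁ = (G₂₂ᴴ)⁻¹`. The border strips appear in reverse order in `ℒ_k(M)`, which is
exactly what makes `S₁` block-triangular there when `G₂₂` is block-triangular in `M`. -/

open Sum

namespace Matrix

variable {l m n p q α R : Type*}

theorem blockTriangular_iff_toBlocks [Zero R] [Preorder α] {b : m ⊕ n → α}
    (hb : ∀ i j, b (inl i) < b (inr j)) (A : Matrix (m ⊕ n) (m ⊕ n) R) :
    A.BlockTriangular b ↔ A.toBlocks₂₁ = 0 ∧ A.toBlocks₁₁.BlockTriangular (b ∘ inl) ∧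
      A.toBlocks₂₂.BlockTriangular (b ∘ inr) := by
  refine ⟨fun h => ⟨ext fun i j => h (hb j i), fun _ _ hij => h hij, fun _ _ hij => h hij⟩, ?_⟩
  rintro ⟨h₂₁, h₁₁, h₂₂⟩ (i | i) (j | j) hij
  · exact h₁₁ hij
  · exact absurd hij (hb i j).not_gt
  · exact congrFun (congrFun h₂₁ i) j
  · exact h₂₂ hij

theorem isUnit_iff_of_toBlocks₂₁_eq_zero [Fintype m] [Fintype n] [DecidableEq m] [DecidableEq n]
    [CommRing R] {A : Matrix (m ⊕ n) (m ⊕ n) R} (h : A.toBlocks₂₁ = 0) :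
    IsUnit A ↔ IsUnit A.toBlocks₁₁ ∧ IsUnit A.toBlocks₂₂ := by
  rw [← isUnit_fromBlocks_zero₂₁, ← h, fromBlocks_toBlocks]

theorem blockTriangular_iff_of_mul_eq_one [Fintype n] [DecidableEq n] [CommRing R] [LinearOrder α]
    {b : n → α} {A B : Matrix n n R} (h : A * B = 1) :
    B.BlockTriangular b ↔ A.BlockTriangular b := by
  have := invertibleOfRightInverse A B h
  have := invertibleOfLeftInverse B A h
  constructor <;> intro hT
  · simpa only [inv_eq_left_inv h] using blockTriangular_inv_of_blockTriangular hT
  · simpa only [inv_eq_right_inv h] using blockTriangular_inv_of_blockTriangular hT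

theorem eq_mul_mul_reindex_iff [Fintype l] [Fintype n] [Fintype q] [CommRing R] (e : q ≃ n)
    (X : Matrix l l R) (M N : Matrix l n R) (S : Matrix q q R) :
    N = X * M * reindex e e S ↔ N.submatrix id e = X * M.submatrix id e * S := by
  have key : (X * M * reindex e e S).submatrix id e = X * M.submatrix id e * S := by
    rw [Matrix.mul_assoc, submatrix_mul _ _ id id e Function.bijective_id, submatrix_id_id,
      ← submatrix_mul_equiv _ _ id e e]
    simp [Matrix.mul_assoc]
  refine ⟨fun h => h ▸ key, fun h => ?_⟩
  simpa using congrArg (submatrix · id e.symm) (h.trans key.symm)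

theorem fromBlocks_zero_one_eq_conjTranspose_mul_mul_iff [Fintype l] [Fintype p] [Fintype n]
    [DecidableEq p] [CommRing R] [StarRing R] (A B : Matrix l n R)
    (G : Matrix (l ⊕ p) (l ⊕ p) R) (S₁ : Matrix p p R) (S₂ : Matrix p n R) (S₄ : Matrix n n R) :
    fromBlocks 0 B (1 : Matrix p p R) 0 =
        Gᴴ * fromBlocks 0 A (1 : Matrix p p R) 0 * fromBlocks S₁ S₂ 0 S₄ ↔
      G.toBlocks₂₁ = 0 ∧ G.toBlocks₂₂ᴴ * S₁ = 1 ∧ B = G.toBlocks₁₁ᴴ * A * S₄ ∧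
        S₂ = -(S₁ * G.toBlocks₁₂ᴴ * A * S₄) := by
  conv_lhs => rw [← fromBlocks_toBlocks G]
  rw [fromBlocks_conjTranspose, fromBlocks_multiply, fromBlocks_multiply]
  simp only [Matrix.mul_zero, Matrix.mul_one, add_zero, zero_add, fromBlocks_inj]
  constructor
  · rintro ⟨h₁₁, hB, h₂₁, h₂₂⟩
    have hS₁ : S₁ * G.toBlocks₂₂ᴴ = 1 := mul_eq_one_comm.1 h₂₁.symm
    have hG₂₁ : G.toBlocks₂₁ = 0 := by
      rw [← conjTranspose_eq_zero, ← Matrix.mul_one G.toBlocks₂₁ᴴ, ← hS₁, ← Matrix.mul_assoc,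
        ← h₁₁, Matrix.zero_mul]
    refine ⟨hG₂₁, h₂₁.symm, by simpa [hG₂₁] using hB, ?_⟩
    rw [← Matrix.one_mul S₂, ← hS₁, Matrix.mul_assoc, eq_neg_of_add_eq_zero_left h₂₂.symm]
    simp only [Matrix.mul_neg, Matrix.mul_assoc]
  · rintro ⟨hG₂₁, hS₁, rfl, rfl⟩
    refine ⟨by simp [hG₂₁], by simp [hG₂₁], hS₁.symm, ?_⟩
    simp only [Matrix.mul_neg, ← Matrix.mul_assoc, hS₁, Matrix.one_mul, neg_add_cancel]

end Matrix

abbrev BorderIdx (k : ℕ) (r : Fin (k - 1) → ℕ) : Type := (i : Fin (k - 1)) × Fin (r i)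

abbrev RightIdx (t k : ℕ) (w : Fin (t - k) → ℕ) : Type := (i : Fin (t - k)) × Fin (w i)

section LeftReduction

variable {F : Type} [Field F] {t k m : ℕ} {hk1 : 1 ≤ k} {hkt : k ≤ t}
  {r : Fin (k - 1) → ℕ} {w : Fin (t - k) → ℕ}

theorem LofM_eq_fromBlocks (M : Matrix (Fin m) (MCol t k m r w) F) :
    LofM t k m r w M =
      fromBlocks 0 (M.submatrix id (Equiv.sumAssoc _ _ _)) (1 : Matrix (BorderIdx k r) _ F) 0 := by
  ext (a | ⟨i', b⟩) (⟨i, c⟩ | (a' | z) | y) <;> try rfl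
  simp only [LofM, of_apply, fromBlocks_apply₂₁, one_apply]
  obtain rfl | hi := eq_or_ne i' i
  · simp [Fin.val_inj]
  · simp [Fin.val_inj, hi]

theorem stripL_inl_lt_stripL_inr (i : BorderIdx k r) (c : LRow k m r ⊕ RightIdx t k w) :
    stripL t k m r w hk1 hkt (inl i) < stripL t k m r w hk1 hkt (inr c) := by
  rcases i with ⟨i, _⟩
  rcases c with _ | ⟨j, _⟩ <;> simp only [stripL, Fin.lt_def] <;> omega

theorem stripL_inr_inl_lt_stripL_inr_inr (x : LRow k m r) (y : RightIdx t k w) :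
    (stripL t k m r w hk1 hkt ∘ inr) (inl x) < (stripL t k m r w hk1 hkt ∘ inr) (inr y) := by
  rcases y with ⟨j, _⟩
  simp only [Function.comp_apply, stripL, Fin.lt_def]
  omega

theorem reindex_blockTriangular_stripM_iff
    (S : Matrix (LRow k m r ⊕ RightIdx t k w) (LRow k m r ⊕ RightIdx t k w) F) :
    (reindex (Equiv.sumAssoc _ _ _) (Equiv.sumAssoc _ _ _) S).BlockTriangular
        (stripM t k m r w hk1 hkt) ↔
      S.BlockTriangular (stripL t k m r w hk1 hkt ∘ inr) ∧ S.toBlocks₁₁.toBlocks₂₁ = 0 ∧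
        S.toBlocks₁₁.toBlocks₂₂.BlockTriangular (stripM t k m r w hk1 hkt ∘ inr ∘ inl) := by
  have hstrip : ∀ i j, (stripM t k m r w hk1 hkt ∘ Equiv.sumAssoc _ _ _) (inl i) <
      (stripM t k m r w hk1 hkt ∘ Equiv.sumAssoc _ _ _) (inr j) := by
    rintro (_ | ⟨i, _⟩) ⟨j, _⟩ <;> simp only [Function.comp_apply, Equiv.sumAssoc_apply_inl_inl,
      Equiv.sumAssoc_apply_inl_inr, Equiv.sumAssoc_apply_inr, stripM, Fin.lt_def] <;> omega
  have hstrip₁₁ : ∀ i j, ((stripM t k m r w hk1 hkt ∘ Equiv.sumAssoc _ _ _) ∘ inl) (inl i) <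
      ((stripM t k m r w hk1 hkt ∘ Equiv.sumAssoc _ _ _) ∘ inl) (inr j) := by
    rintro _ ⟨j, _⟩
    simp only [Function.comp_apply, Equiv.sumAssoc_apply_inl_inl, Equiv.sumAssoc_apply_inl_inr,
      stripM, Fin.lt_def]
    omega
  rw [blockTriangular_reindex_iff, blockTriangular_iff_toBlocks hstrip,
    blockTriangular_iff_toBlocks stripL_inr_inl_lt_stripL_inr_inr,
    blockTriangular_iff_toBlocks hstrip₁₁ S.toBlocks₁₁]
  -- the boxed strip of `ℒ_k(M)` is a single strip, so no condition applies inside it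
  exact ⟨fun ⟨h₂₁, ⟨hG₂₁, _, hG₂₂⟩, h₂₂⟩ =>
      ⟨⟨h₂₁, fun _ _ h => (h.ne rfl).elim, h₂₂⟩, hG₂₁, hG₂₂⟩,
    fun ⟨⟨h₂₁, _, h₂₂⟩, hG₂₁, hG₂₂⟩ =>
      ⟨h₂₁, ⟨hG₂₁, fun _ _ h => (h.ne rfl).elim, hG₂₂⟩, h₂₂⟩⟩

variable [StarRing F]

theorem blockTriangular_stripL_inl_iff {X Y : Matrix (BorderIdx k r) (BorderIdx k r) F}
    (h : Xᴴ * Y = 1) :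
    Y.BlockTriangular (stripL t k m r w hk1 hkt ∘ inl) ↔
      X.BlockTriangular (stripM t k m r w hk1 hkt ∘ inr ∘ inl) := by
  rw [blockTriangular_iff_of_mul_eq_one h]
  refine forall_comm.trans (forall₂_congr fun ⟨i, _⟩ ⟨j, _⟩ => ?_)
  simp only [Function.comp_apply, stripL, stripM, Fin.lt_def, conjTranspose_apply, star_eq_zero]
  have := i.isLt; have := j.isLt
  exact imp_congr_left (by omega)

theorem LofM_eq_conjTranspose_mul_mul_iff (M N : Matrix (Fin m) (MCol t k m r w) F)
    (S₁ : Matrix (BorderIdx k r) (BorderIdx k r) F)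
    (S₂ : Matrix (BorderIdx k r) (LRow k m r ⊕ RightIdx t k w) F)
    (S₄ : Matrix (LRow k m r ⊕ RightIdx t k w) (LRow k m r ⊕ RightIdx t k w) F) :
    LofM t k m r w N = ((fromBlocks S₁ S₂ 0 S₄).submatrix (fun x => inr (inl x))
        (fun x => inr (inl x)))ᴴ * LofM t k m r w M * fromBlocks S₁ S₂ 0 S₄ ↔
      S₄.toBlocks₁₁.toBlocks₂₁ = 0 ∧ S₄.toBlocks₁₁.toBlocks₂₂ᴴ * S₁ = 1 ∧
        N.submatrix id (Equiv.sumAssoc _ _ _) =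
          S₄.toBlocks₁₁.toBlocks₁₁ᴴ * M.submatrix id (Equiv.sumAssoc _ _ _) * S₄ ∧
        S₂ = -(S₁ * S₄.toBlocks₁₁.toBlocks₁₂ᴴ * M.submatrix id (Equiv.sumAssoc _ _ _) * S₄) := by
  rw [LofM_eq_fromBlocks, LofM_eq_fromBlocks]
  exact fromBlocks_zero_one_eq_conjTranspose_mul_mul_iff _ _ _ _ _ _

end LeftReduction

/-- The bangles `ℒ_k(M)` and `ℒ_k(N)` are *congruent if and only if the bangles
`M` and `N` are *congruent. -/
theorem left_reduction_star_congruence {F : Type} [Field F] [StarRing F]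
    (t k m : ℕ) (hk1 : 1 ≤ k) (hkt : k ≤ t)
    (r : Fin (k - 1) → ℕ) (w : Fin (t - k) → ℕ)
    (M N : Matrix (Fin m) (MCol t k m r w) F) :
    BangleStarCongr (stripL t k m r w hk1 hkt) (fun x => Sum.inr (Sum.inl x))
        (LofM t k m r w M) (LofM t k m r w N) ↔
      BangleStarCongr (stripM t k m r w hk1 hkt) Sum.inl M N := by
  set e : LRow k m r ⊕ RightIdx t k w ≃ MCol t k m r w := Equiv.sumAssoc _ _ _
  constructor
  · rintro ⟨S, hS, hStri, hLN⟩
    obtain ⟨h₂₁, hS₁, hS₄⟩ := (blockTriangular_iff_toBlocks stripL_inl_lt_stripL_inr S).1 hStri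
    rw [← fromBlocks_toBlocks S, h₂₁] at hS hLN
    obtain ⟨hG₂₁, hG₂₂, hN, -⟩ := (LofM_eq_conjTranspose_mul_mul_iff _ _ _ _ _).1 hLN
    refine ⟨reindex e e S.toBlocks₂₂, ?_, ?_, (eq_mul_mul_reindex_iff e _ _ _ _).2 hN⟩
    · rw [reindex_apply, isUnit_submatrix_equiv]
      exact (isUnit_fromBlocks_zero₂₁.1 hS).2
    · exact (reindex_blockTriangular_stripM_iff _).2
        ⟨hS₄, hG₂₁, (blockTriangular_stripL_inl_iff hG₂₂).1 hS₁⟩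
  · rintro ⟨S, hS, hStri, hMN⟩
    obtain ⟨S₄, rfl⟩ := (reindex e e).surjective S
    obtain ⟨hS₄, hG₂₁, hG₂₂⟩ := (reindex_blockTriangular_stripM_iff S₄).1 hStri
    rw [reindex_apply, isUnit_submatrix_equiv] at hS
    have hG : IsUnit S₄.toBlocks₁₁.toBlocks₂₂ := by
      have h₂₁ := ((blockTriangular_iff_toBlocks stripL_inr_inl_lt_stripL_inr_inr S₄).1 hS₄).1
      exact ((isUnit_iff_of_toBlocks₂₁_eq_zero hG₂₁).1
        ((isUnit_iff_of_toBlocks₂₁_eq_zero h₂₁).1 hS).1).2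
    obtain ⟨S₁, hS₁⟩ := hG.star.exists_right_inv
    refine ⟨fromBlocks S₁ (-(S₁ * S₄.toBlocks₁₁.toBlocks₁₂ᴴ * M.submatrix id e * S₄)) 0 S₄,
      ?_, ?_, (LofM_eq_conjTranspose_mul_mul_iff _ _ _ _ _).2
        ⟨hG₂₁, hS₁, (eq_mul_mul_reindex_iff e _ _ _ _).1 hMN, rfl⟩⟩
    · exact isUnit_fromBlocks_zero₂₁.2
        ⟨(isUnit_iff_isUnit_det _).2 (isUnit_det_of_left_inverse hS₁), hS⟩
    · exact (blockTriangular_iff_toBlocks stripL_inl_lt_stripL_inr _).2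
        ⟨toBlocks_fromBlocks₂₁ .., (blockTriangular_stripL_inl_iff hS₁).2 hG₂₂, hS₄⟩
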